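/- Let X be a subcube of a cluster of HCN_n inducing Q_g, 1 ≤ g ≤ n−1, and set F₁ = N(X) and F₂ = N[X]. Then F₁ and F₂ are distinct g-good-neighbor faulty sets of HCN_n, |F₁| = 2^g(n+1−g), |F₂| = 2^g(n+2−g), and there is no edge between V(HCN_n) \ (F₁ ∪ F₂) and the symmetric difference F₁ Δ F₂. -/

import Mathlib

/-- Vertices of the hierarchical cubic network: pairs (cluster label, position). -/
abbrev HVert (n : ℕ) := (Fin n → Bool) × (Fin n → Bool)

/-- The hierarchical cubic network HCN_n. Within a cluster (same first coordinate),
two vertices are adjacent iff their second coordinates differ in exactly one bit.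
Crossing edges: (x,y) with x ≠ y is adjacent to (y,x); (x,x) is adjacent to (x̄,x̄). -/
def HCN (n : ℕ) : SimpleGraph (HVert n) :=
  SimpleGraph.fromRel (fun u v =>
    (u.1 = v.1 ∧ (Finset.univ.filter (fun i => u.2 i ≠ v.2 i)).card = 1) ∨
    (u.1 ≠ u.2 ∧ v = (u.2, u.1)) ∨
    (u.1 = u.2 ∧ v = (fun i => !u.1 i, fun i => !u.2 i)))

/-- `u` and `v` are joined by a crossing edge of HCN_n. -/
def IsCrossing (n : ℕ) (u v : HVert n) : Prop :=
  ((u.1 ≠ u.2 ∧ v = (u.2, u.1)) ∨ (u.1 = u.2 ∧ v = (fun i => !u.1 i, fun i => !u.2 i))) ∨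
  ((v.1 ≠ v.2 ∧ u = (v.2, v.1)) ∨ (v.1 = v.2 ∧ u = (fun i => !v.1 i, fun i => !v.2 i)))

/-- `F` is a g-good-neighbor faulty set of HCN_n: every vertex outside `F`
has at least `g` neighbors outside `F`. -/
def GoodNbrSet (n g : ℕ) (F : Set (HVert n)) : Prop :=
  ∀ v ∉ F, g ≤ (((HCN n).neighborSet v) \ F).ncard

/-- `X` is a subcube of a cluster of HCN_n inducing a copy of Q_g: all vertices
of `X` share the first coordinate `x`, and their second coordinates form a
g-dimensional subcube (they agree on a set `S` of `n - g` fixed coordinates). -/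
def IsClusterSubcube (n g : ℕ) (X : Set (HVert n)) : Prop :=
  ∃ (x : Fin n → Bool) (S : Finset (Fin n)) (f : Fin n → Bool),
    S.card = n - g ∧ X = {v | v.1 = x ∧ ∀ i ∈ S, v.2 i = f i}

/-- The (open) neighborhood of a vertex set in HCN_n. -/
def setNbhd (n : ℕ) (X : Set (HVert n)) : Set (HVert n) :=
  {w | w ∉ X ∧ ∃ v ∈ X, (HCN n).Adj v w}

/-!
Write `X = {x} × C`, where `C` is the subcube of words agreeing with `f` on a set `S` of
`n - g` coordinates, and let `d y` count the coordinates of `S` at which `y` disagrees with `f`.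
Then `N(X)` consists of the vertices `(x, z)` with `d z = 1` together with the crossing images
of `X`, which gives both cardinalities. Every vertex has degree `n + 1`, and a vertex outside
`N[X]` has at most two neighbours in `N[X]`: inside the cluster `x` because flipping one bit
changes `d` by at most one, elsewhere because `N[X]` meets the cluster `c` only in `(c, x)` and
`(c, x̄)`. Hence `N[X]` is `g`-good for `g ≤ n - 1`; for `N(X)` the vertices of `X` still keep
their `g` neighbours inside `X`. Finally `N(X) Δ N[X] = X`, and every neighbour of `X` outside
`X` lies in `N(X)`.
-/

namespace HCN

variable {n : ℕ}

def flipBit (y : Fin n → Bool) (i : Fin n) : Fin n → Bool := Function.update y i (!y i)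

@[simp]
lemma flipBit_apply_self (y : Fin n → Bool) (i : Fin n) : flipBit y i i = !y i := by
  simp [flipBit]

lemma flipBit_apply_of_ne (y : Fin n → Bool) {i j : Fin n} (h : j ≠ i) :
    flipBit y i j = y j := by
  simp [flipBit, h]

@[simp]
lemma flipBit_flipBit (y : Fin n → Bool) (i : Fin n) : flipBit (flipBit y i) i = y := by
  funext j
  by_cases h : j = i
  · subst h; simp
  · simp [flipBit_apply_of_ne _ h]

lemma flipBit_ne_self (y : Fin n → Bool) (i : Fin n) : flipBit y i ≠ y := by
  intro h
  simpa using congrFun h i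

lemma flipBit_injective (y : Fin n → Bool) : Function.Injective (flipBit y) := by
  intro i j h
  by_contra hij
  simpa [flipBit_apply_of_ne y hij] using congrFun h i

lemma hammingDist_eq_one_iff {y z : Fin n → Bool} :
    hammingDist y z = 1 ↔ ∃ i, z = flipBit y i := by
  constructor
  · intro h
    obtain ⟨i, hi⟩ := Finset.card_eq_one.mp h
    have hmem (j : Fin n) : y j ≠ z j ↔ j = i := by
      simpa using Finset.ext_iff.mp hi j
    refine ⟨i, funext fun j => ?_⟩
    by_cases hj : j = i
    · subst hj
      simpa [eq_comm, Bool.eq_not_iff] using (hmem j).2 rfl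
    · rw [flipBit_apply_of_ne y hj]
      exact (not_not.mp (mt (hmem j).1 hj)).symm
  · rintro ⟨i, rfl⟩
    refine Finset.card_eq_one.mpr ⟨i, Finset.ext fun j => ?_⟩
    by_cases hj : j = i
    · subst hj; simp
    · simp [flipBit_apply_of_ne y hj, hj]

lemma hammingDist_flipBit (y : Fin n → Bool) (i : Fin n) : hammingDist y (flipBit y i) = 1 :=
  hammingDist_eq_one_iff.mpr ⟨i, rfl⟩

lemma hammingDist_not (y : Fin n → Bool) : hammingDist y (fun i => !y i) = n := by
  simp [hammingDist]

lemma hammingDist_ne_one_of_eq_or_eq_not (hn : 2 ≤ n) {x y z : Fin n → Bool}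
    (hy : y = x ∨ y = fun i => !x i) (hz : z = x ∨ z = fun i => !x i) :
    hammingDist y z ≠ 1 := by
  rcases hy with rfl | rfl <;> rcases hz with rfl | rfl
  · simp
  · rw [hammingDist_not]; omega
  · rw [hammingDist_comm, hammingDist_not]; omega
  · simp

def cross (v : HVert n) : HVert n :=
  if v.1 = v.2 then (fun i => !v.1 i, fun i => !v.2 i) else (v.2, v.1)

@[simp]
lemma cross_cross (v : HVert n) : cross (cross v) = v := by
  obtain ⟨a, b⟩ := v
  by_cases h : a = b
  · subst h; simp [cross]
  · simp [cross, h, Ne.symm h]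

lemma cross_injective : Function.Injective (cross (n := n)) :=
  Function.LeftInverse.injective cross_cross

lemma eq_cross_iff_eq_cross {u v : HVert n} : v = cross u ↔ u = cross v := by
  constructor <;> rintro rfl <;> simp

lemma cross_fst_ne (hn : 0 < n) (v : HVert n) : (cross v).1 ≠ v.1 := by
  unfold cross
  split_ifs with h
  · intro h'
    simpa using congrFun h' ⟨0, hn⟩
  · exact fun h' => h h'.symm

lemma cross_snd (v : HVert n) : (cross v).2 = v.1 ∨ (cross v).2 = fun i => !v.1 i := by
  unfold cross
  split_ifs with h
  · right; rw [h]
  · left; rfl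

lemma eq_cross_iff {u v : HVert n} :
    v = cross u ↔ (u.1 ≠ u.2 ∧ v = (u.2, u.1)) ∨
      (u.1 = u.2 ∧ v = (fun i => !u.1 i, fun i => !u.2 i)) := by
  unfold cross
  split_ifs with h <;> simp [h]

lemma adj_iff (hn : 0 < n) {u v : HVert n} :
    (HCN n).Adj u v ↔ (u.1 = v.1 ∧ ∃ i, v.2 = flipBit u.2 i) ∨ v = cross u := by
  -- the within-cluster condition of `HCN` is `hammingDist a.2 b.2 = 1`, unfolded
  have hdist : ∀ a b : HVert n, (Finset.univ.filter fun i => a.2 i ≠ b.2 i).card = 1 ↔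
      ∃ i, b.2 = flipBit a.2 i := fun a b => hammingDist_eq_one_iff
  simp only [HCN, SimpleGraph.fromRel_adj, ← eq_cross_iff, hdist,
    ← eq_cross_iff_eq_cross (u := u)]
  constructor
  · rintro ⟨-, h | ⟨h1, i, h2⟩ | h⟩
    · exact h
    · exact Or.inl ⟨h1.symm, i, by rw [h2, flipBit_flipBit]⟩
    · exact Or.inr h
  · rintro (⟨h1, i, h2⟩ | rfl)
    · refine ⟨fun huv => flipBit_ne_self u.2 i ?_, Or.inl (Or.inl ⟨h1, i, h2⟩)⟩
      rw [← h2, huv]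
    · exact ⟨fun h => cross_fst_ne hn u (congrArg Prod.fst h).symm, Or.inl (Or.inr rfl)⟩

lemma neighborSet_eq (hn : 0 < n) (v : HVert n) :
    (HCN n).neighborSet v = insert (cross v) (Set.range fun i => (v.1, flipBit v.2 i)) := by
  ext w
  rw [SimpleGraph.mem_neighborSet, adj_iff hn, Set.mem_insert_iff, Set.mem_range, or_comm]
  refine or_congr Iff.rfl ⟨fun ⟨h1, i, h2⟩ => ⟨i, Prod.ext h1 h2.symm⟩, ?_⟩
  rintro ⟨i, rfl⟩
  exact ⟨rfl, i, rfl⟩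

lemma ncard_neighborSet (hn : 0 < n) (v : HVert n) : ((HCN n).neighborSet v).ncard = n + 1 := by
  have hinj : Function.Injective fun i => ((v.1, flipBit v.2 i) : HVert n) :=
    fun i j h => flipBit_injective v.2 (congrArg Prod.snd h)
  have hcross : cross v ∉ Set.range fun i => ((v.1, flipBit v.2 i) : HVert n) := by
    rintro ⟨i, hi⟩
    exact cross_fst_ne hn v (congrArg Prod.fst hi).symm
  rw [neighborSet_eq hn, Set.ncard_insert_of_notMem hcross, Set.ncard_range_of_injective hinj,
    Nat.card_eq_fintype_card, Fintype.card_fin]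

lemma goodNbrSet_of_ncard_inter_le (hn : 0 < n) {g : ℕ} {F : Set (HVert n)}
    (h : ∀ v ∉ F, ((HCN n).neighborSet v ∩ F).ncard + g ≤ n + 1) : GoodNbrSet n g F := by
  intro v hv
  have := Set.ncard_inter_add_ncard_sdiff_eq_ncard ((HCN n).neighborSet v) F
  rw [ncard_neighborSet hn] at this
  linarith [h v hv]

section Subcube

variable (S : Finset (Fin n)) (f : Fin n → Bool)

def subcube : Set (Fin n → Bool) := {y | ∀ i ∈ S, y i = f i}

def subcubeDist (y : Fin n → Bool) : ℕ := (S.filter fun i => y i ≠ f i).card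

variable {S f}

lemma subcubeDist_eq_zero_iff {y : Fin n → Bool} :
    subcubeDist S f y = 0 ↔ y ∈ subcube S f := by
  simp [subcubeDist, subcube, Finset.filter_eq_empty_iff]

lemma subcubeDist_flipBit_le (y : Fin n → Bool) (i : Fin n) :
    subcubeDist S f (flipBit y i) ≤ subcubeDist S f y + 1 := by
  refine (Finset.card_le_card fun j hj => ?_).trans (Finset.card_insert_le i _)
  rw [Finset.mem_insert]
  by_cases hji : j = i
  · exact Or.inl hji
  · rw [Finset.mem_filter, flipBit_apply_of_ne y hji] at hj
    exact Or.inr (Finset.mem_filter.mpr hj)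

lemma subcubeDist_le_flipBit (y : Fin n → Bool) (i : Fin n) :
    subcubeDist S f y ≤ subcubeDist S f (flipBit y i) + 1 := by
  simpa using subcubeDist_flipBit_le (S := S) (f := f) (flipBit y i) i

lemma subcubeDist_flipBit_add_one {y : Fin n → Bool} {i : Fin n} (hi : i ∈ S)
    (hyi : y i ≠ f i) : subcubeDist S f (flipBit y i) + 1 = subcubeDist S f y := by
  have herase :
      (S.filter fun j => flipBit y i j ≠ f j) = (S.filter fun j => y j ≠ f j).erase i := by
    ext j
    by_cases hji : j = i
    · subst hji
      simp only [Finset.mem_filter, flipBit_apply_self, Finset.mem_erase]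
      simp_all
    · simp [flipBit_apply_of_ne y hji, hji]
  rw [subcubeDist, subcubeDist, herase,
    Finset.card_erase_add_one (Finset.mem_filter.mpr ⟨hi, hyi⟩)]

lemma mem_filter_of_subcubeDist_flipBit_lt {y : Fin n → Bool} {i : Fin n}
    (h : subcubeDist S f (flipBit y i) < subcubeDist S f y) :
    i ∈ S.filter fun j => y j ≠ f j := by
  by_contra hi
  refine h.not_ge (Finset.card_le_card fun j hj => ?_)
  have hji : j ≠ i := by rintro rfl; exact hi hj
  rw [Finset.mem_filter, flipBit_apply_of_ne y hji]
  exact Finset.mem_filter.mp hj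

lemma flipBit_mem_subcube {y : Fin n → Bool} (hy : y ∈ subcube S f) {i : Fin n} (hi : i ∉ S) :
    flipBit y i ∈ subcube S f := fun j hj => by
  rw [flipBit_apply_of_ne y (by rintro rfl; exact hi hj)]
  exact hy j hj

lemma injOn_flipBit :
    Set.InjOn (fun p => flipBit p.1 p.2) (subcube S f ×ˢ (S : Set (Fin n))) := by
  rintro ⟨y, i⟩ ⟨hy, hi⟩ ⟨z, j⟩ ⟨hz, hj⟩ h
  dsimp only at hy hi hz h
  obtain rfl | hij := eq_or_ne i j
  · simpa using congrArg (flipBit · i) h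
  · have := congrFun h i
    rw [flipBit_apply_self, flipBit_apply_of_ne z hij, hy i hi, hz i hi] at this
    simp at this

lemma setOf_subcubeDist_eq_one :
    {z | subcubeDist S f z = 1} =
      (fun p => flipBit p.1 p.2) '' (subcube S f ×ˢ (S : Set (Fin n))) := by
  ext z
  constructor
  · intro (hz : subcubeDist S f z = 1)
    obtain ⟨i, hi⟩ := Finset.card_eq_one.mp hz
    obtain ⟨hiS, hzi⟩ := Finset.mem_filter.mp (hi ▸ Finset.mem_singleton_self i)
    have hflip := subcubeDist_flipBit_add_one hiS hzi
    rw [hz, Nat.add_eq_right, subcubeDist_eq_zero_iff] at hflip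
    exact ⟨(flipBit z i, i), ⟨hflip, hiS⟩, flipBit_flipBit z i⟩
  · rintro ⟨⟨y, i⟩, ⟨hy, hi⟩, rfl⟩
    dsimp only at hy hi ⊢
    have hyi : flipBit y i i ≠ f i := by simp [hy i hi]
    have := subcubeDist_flipBit_add_one hi hyi
    rw [flipBit_flipBit, subcubeDist_eq_zero_iff.mpr hy] at this
    exact this.symm

lemma ncard_subcube : (subcube S f).ncard = 2 ^ (n - S.card) := by
  have : subcube S f = ↑(Fintype.piFinset fun i => if i ∈ S then {f i} else Finset.univ) := by
    ext y
    simp only [subcube, Set.mem_ofPred_eq, Fintype.coe_piFinset, Set.mem_pi, Set.mem_univ,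
      true_implies]
    refine forall_congr' fun i => ?_
    split_ifs with hi <;> simp [hi]
  rw [this, Set.ncard_coe_finset, Fintype.card_piFinset]
  simp only [apply_ite Finset.card, Finset.card_singleton, Finset.card_univ, Fintype.card_bool]
  rw [Finset.prod_ite]
  simp [Finset.filter_not, Finset.card_sdiff]

lemma ncard_setOf_subcubeDist_eq_one :
    {z | subcubeDist S f z = 1}.ncard = S.card * 2 ^ (n - S.card) := by
  rw [setOf_subcubeDist_eq_one, injOn_flipBit.ncard_image, Set.ncard_prod, ncard_subcube,
    Set.ncard_coe_finset, mul_comm]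

lemma ncard_setOf_subcubeDist_flipBit_le_one_le {y : Fin n → Bool}
    (hy : 2 ≤ subcubeDist S f y) : {j | subcubeDist S f (flipBit y j) ≤ 1}.ncard ≤ 2 := by
  obtain h | ⟨j, hj : subcubeDist S f (flipBit y j) ≤ 1⟩ :=
    Set.eq_empty_or_nonempty {j | subcubeDist S f (flipBit y j) ≤ 1}
  · simp [h]
  have hsub : {j | subcubeDist S f (flipBit y j) ≤ 1} ⊆ ↑(S.filter fun j => y j ≠ f j) :=
    fun k (hk : subcubeDist S f (flipBit y k) ≤ 1) =>
      Finset.mem_coe.mpr (mem_filter_of_subcubeDist_flipBit_lt (by omega))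
  calc _ ≤ subcubeDist S f y := (Set.ncard_le_ncard hsub).trans_eq (Set.ncard_coe_finset _)
    _ ≤ 2 := by linarith [subcubeDist_le_flipBit (S := S) (f := f) y j]

end Subcube

lemma symmDiff_setNbhd_union_setNbhd (X : Set (HVert n)) :
    symmDiff (setNbhd n X) (X ∪ setNbhd n X) = X := by
  rw [symmDiff_of_le Set.subset_union_right, Set.union_sdiff_right, sdiff_eq_left]
  exact Set.disjoint_left.mpr fun w hw hwN => hwN.1 hw

lemma setNbhd_ne_union_setNbhd {X : Set (HVert n)} (hX : X.Nonempty) :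
    setNbhd n X ≠ X ∪ setNbhd n X := by
  obtain ⟨v, hv⟩ := hX
  intro h
  have hvN : v ∈ setNbhd n X := h ▸ Or.inl hv
  exact hvN.1 hv

lemma not_adj_of_notMem_union_setNbhd {X : Set (HVert n)} {u v : HVert n}
    (hu : u ∉ X ∪ setNbhd n X) (hv : v ∈ X) : ¬ (HCN n).Adj u v :=
  fun h => hu (Or.inr ⟨fun huX => hu (Or.inl huX), v, hv, h.symm⟩)

section ClusterSubcube

def clusterSubcube (x : Fin n → Bool) (S : Finset (Fin n)) (f : Fin n → Bool) : Set (HVert n) :=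
  {x} ×ˢ subcube S f

variable {x f : Fin n → Bool} {S : Finset (Fin n)}

lemma ncard_clusterSubcube : (clusterSubcube x S f).ncard = 2 ^ (n - S.card) := by
  rw [clusterSubcube, Set.ncard_prod, Set.ncard_singleton, one_mul, ncard_subcube]

lemma setNbhd_clusterSubcube (hn : 0 < n) :
    setNbhd n (clusterSubcube x S f) =
      {x} ×ˢ {z | subcubeDist S f z = 1} ∪ cross '' clusterSubcube x S f := by
  ext w
  constructor
  · rintro ⟨hwX, v, hv, hadj⟩
    rcases (adj_iff hn).mp hadj with ⟨h1, i, h2⟩ | rfl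
    · have hw1 : w.1 = x := h1 ▸ hv.1
      have hw0 : subcubeDist S f w.2 ≠ 0 := fun h => hwX ⟨hw1, subcubeDist_eq_zero_iff.mp h⟩
      have hle := subcubeDist_flipBit_le (S := S) (f := f) v.2 i
      rw [subcubeDist_eq_zero_iff.mpr hv.2, ← h2] at hle
      exact Or.inl ⟨hw1, show subcubeDist S f w.2 = 1 by omega⟩
    · exact Or.inr ⟨v, hv, rfl⟩
  · rintro (⟨hw1, hw2⟩ | ⟨v, hv, rfl⟩)
    · have hw0 : w ∉ clusterSubcube x S f := fun hw => by
        simp [subcubeDist_eq_zero_iff.mpr hw.2] at hw2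
      rw [setOf_subcubeDist_eq_one] at hw2
      obtain ⟨⟨y, i⟩, ⟨hy, -⟩, hyi⟩ := hw2
      exact ⟨hw0, (x, y), ⟨rfl, hy⟩, (adj_iff hn).mpr (Or.inl ⟨hw1.symm, i, hyi.symm⟩)⟩
    · refine ⟨fun h => cross_fst_ne hn v (h.1.trans hv.1.symm), v, hv, ?_⟩
      exact (adj_iff hn).mpr (Or.inr rfl)

lemma union_setNbhd_clusterSubcube (hn : 0 < n) :
    clusterSubcube x S f ∪ setNbhd n (clusterSubcube x S f) =
      {x} ×ˢ {z | subcubeDist S f z ≤ 1} ∪ cross '' clusterSubcube x S f := by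
  have hle : {z | subcubeDist S f z ≤ 1} = subcube S f ∪ {z | subcubeDist S f z = 1} := by
    ext z
    simp only [Set.mem_union, ← subcubeDist_eq_zero_iff]
    exact Nat.le_one_iff_eq_zero_or_eq_one
  rw [setNbhd_clusterSubcube hn, ← Set.union_assoc, hle, Set.prod_union, clusterSubcube]

lemma ncard_setNbhd_clusterSubcube (hn : 0 < n) :
    (setNbhd n (clusterSubcube x S f)).ncard = 2 ^ (n - S.card) * (S.card + 1) := by
  have hdisj :
      Disjoint ({x} ×ˢ {z | subcubeDist S f z = 1}) (cross '' clusterSubcube x S f) := by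
    refine Set.disjoint_left.mpr fun w hw ⟨v, hv, hvw⟩ => cross_fst_ne hn v ?_
    rw [hvw, hw.1, hv.1]
  rw [setNbhd_clusterSubcube hn, Set.ncard_union_eq hdisj, Set.ncard_prod, Set.ncard_singleton,
    one_mul, ncard_setOf_subcubeDist_eq_one, Set.ncard_image_of_injective _ cross_injective,
    ncard_clusterSubcube]
  ring

lemma ncard_union_setNbhd_clusterSubcube (hn : 0 < n) :
    (clusterSubcube x S f ∪ setNbhd n (clusterSubcube x S f)).ncard =
      2 ^ (n - S.card) * (S.card + 2) := by
  have hdisj : Disjoint (clusterSubcube x S f) (setNbhd n (clusterSubcube x S f)) :=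
    Set.disjoint_left.mpr fun w hw hwN => hwN.1 hw
  rw [Set.ncard_union_eq hdisj, ncard_clusterSubcube, ncard_setNbhd_clusterSubcube hn]
  ring

lemma ncard_neighborSet_inter_le_of_fst_eq (hn : 0 < n) {v : HVert n} (hvx : v.1 = x)
    (hv : v ∉ clusterSubcube x S f ∪ setNbhd n (clusterSubcube x S f)) :
    ((HCN n).neighborSet v ∩ (clusterSubcube x S f ∪ setNbhd n (clusterSubcube x S f))).ncard
      ≤ 2 := by
  set N := clusterSubcube x S f ∪ setNbhd n (clusterSubcube x S f) with hN
  rw [union_setNbhd_clusterSubcube hn] at hN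
  have hvd : 2 ≤ subcubeDist S f v.2 := by
    by_contra h
    exact hv (hN ▸ Or.inl ⟨hvx, show subcubeDist S f v.2 ≤ 1 by omega⟩)
  have hsub : (HCN n).neighborSet v ∩ N ⊆
      (fun j => (v.1, flipBit v.2 j)) '' {j | subcubeDist S f (flipBit v.2 j) ≤ 1} := by
    rintro w ⟨hw, hwN⟩
    rw [neighborSet_eq hn] at hw
    rw [hN] at hwN
    rcases hw with rfl | ⟨j, rfl⟩
    · exfalso
      rcases hwN with ⟨h1, -⟩ | hc
      · exact cross_fst_ne hn v (h1.trans hvx.symm)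
      · exact hv (Or.inl (cross_injective.mem_set_image.mp hc))
    · rcases hwN with ⟨-, hj⟩ | ⟨u, hu, hcu⟩
      · exact ⟨j, hj, rfl⟩
      · exact (cross_fst_ne hn u (by rw [hcu, hu.1, hvx])).elim
  exact (Set.ncard_le_ncard hsub).trans
    ((Set.ncard_image_le (Set.toFinite _)).trans (ncard_setOf_subcubeDist_flipBit_le_one_le hvd))

/-- Outside the cluster `x`, `N[X]` meets only `cross '' X`, whose vertices have second
coordinate `x` or `x̄`; if moreover `cross v ∈ N[X]`, then `v.2` itself is `x` or `x̄`, and for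
`n ≥ 2` no flip of it is. -/
lemma ncard_neighborSet_inter_le_of_fst_ne (hn : 2 ≤ n) {v : HVert n} (hvx : v.1 ≠ x) :
    ((HCN n).neighborSet v ∩ (clusterSubcube x S f ∪ setNbhd n (clusterSubcube x S f))).ncard
      ≤ 2 := by
  have hn0 : 0 < n := by omega
  set N := clusterSubcube x S f ∪ setNbhd n (clusterSubcube x S f) with hN
  rw [union_setNbhd_clusterSubcube hn0] at hN
  have hflip (j : Fin n) (hj : (v.1, flipBit v.2 j) ∈ N) :
      flipBit v.2 j = x ∨ flipBit v.2 j = fun i => !x i := by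
    rcases hN ▸ hj with ⟨h1, -⟩ | ⟨u, hu, hcu⟩
    · exact absurd h1 hvx
    · simpa [hcu, show u.1 = x from hu.1] using cross_snd u
  by_cases hc : cross v ∈ N
  · have hv2 : v.2 = x ∨ v.2 = fun i => !x i := by
      rcases hN ▸ hc with ⟨h1, -⟩ | hc
      · simpa [show (cross v).1 = x from h1] using cross_snd (cross v)
      · exact absurd (cross_injective.mem_set_image.mp hc).1 hvx
    have hsub : (HCN n).neighborSet v ∩ N ⊆ {cross v} := by
      rintro w ⟨hw, hwN⟩
      rw [neighborSet_eq hn0] at hw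
      rcases hw with rfl | ⟨j, rfl⟩
      · rfl
      · exact (hammingDist_ne_one_of_eq_or_eq_not hn hv2 (hflip j hwN)
          (hammingDist_flipBit v.2 j)).elim
    exact (Set.ncard_le_ncard hsub).trans (by simp)
  · have hsub : (HCN n).neighborSet v ∩ N ⊆ {(v.1, x), (v.1, fun i => !x i)} := by
      rintro w ⟨hw, hwN⟩
      rw [neighborSet_eq hn0] at hw
      rcases hw with rfl | ⟨j, rfl⟩
      · exact absurd hwN hc
      · rcases hflip j hwN with h | h <;> simp [h]
    exact (Set.ncard_le_ncard hsub).trans ((Set.ncard_insert_le _ _).trans (by simp))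

lemma ncard_neighborSet_inter_union_setNbhd_le (hn : 2 ≤ n) {v : HVert n}
    (hv : v ∉ clusterSubcube x S f ∪ setNbhd n (clusterSubcube x S f)) :
    ((HCN n).neighborSet v ∩ (clusterSubcube x S f ∪ setNbhd n (clusterSubcube x S f))).ncard
      ≤ 2 := by
  obtain hvx | hvx := eq_or_ne v.1 x
  · exact ncard_neighborSet_inter_le_of_fst_eq (by omega) hvx hv
  · exact ncard_neighborSet_inter_le_of_fst_ne hn hvx

lemma goodNbrSet_union_setNbhd_clusterSubcube (hn : 2 ≤ n) {g : ℕ} (hg : g ≤ n - 1) :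
    GoodNbrSet n g (clusterSubcube x S f ∪ setNbhd n (clusterSubcube x S f)) :=
  goodNbrSet_of_ncard_inter_le (by omega) fun _ hv => by
    have := ncard_neighborSet_inter_union_setNbhd_le hn hv
    omega

lemma goodNbrSet_setNbhd_clusterSubcube (hn : 2 ≤ n) {g : ℕ} (hg : g ≤ n - 1)
    (hgS : g ≤ n - S.card) : GoodNbrSet n g (setNbhd n (clusterSubcube x S f)) := by
  intro v hv
  by_cases hvX : v ∈ clusterSubcube x S f
  · have hinj : Function.Injective fun j => ((v.1, flipBit v.2 j) : HVert n) :=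
      fun i j h => flipBit_injective v.2 (congrArg Prod.snd h)
    have hsub : (fun j => ((v.1, flipBit v.2 j) : HVert n)) '' ↑Sᶜ ⊆
        (HCN n).neighborSet v \ setNbhd n (clusterSubcube x S f) := by
      rintro _ ⟨j, hj, rfl⟩
      have hjX : (v.1, flipBit v.2 j) ∈ clusterSubcube x S f :=
        ⟨hvX.1, flipBit_mem_subcube hvX.2 (by simpa using hj)⟩
      exact ⟨(adj_iff (by omega)).mpr (Or.inl ⟨rfl, j, rfl⟩), fun hjN => hjN.1 hjX⟩
    calc g ≤ Sᶜ.card := by rwa [Finset.card_compl, Fintype.card_fin]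
      _ = _ := by rw [Set.ncard_image_of_injective _ hinj, Set.ncard_coe_finset]
      _ ≤ _ := Set.ncard_le_ncard hsub
  · refine (goodNbrSet_union_setNbhd_clusterSubcube hn hg v ?_).trans
      (Set.ncard_le_ncard (Set.sdiff_subset_sdiff_right Set.subset_union_right))
    rintro (h | h)
    exacts [hvX h, hv h]

end ClusterSubcube

end HCN

theorem stmt_12_general (n g : ℕ) (hn : 2 ≤ n) (hg2 : g ≤ n - 1)
    (X : Set (HVert n)) (hX : IsClusterSubcube n g X)
    (F1 F2 : Set (HVert n)) (hF1 : F1 = setNbhd n X) (hF2 : F2 = X ∪ setNbhd n X) :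
    F1 ≠ F2 ∧ GoodNbrSet n g F1 ∧ GoodNbrSet n g F2 ∧
    F1.ncard = 2 ^ g * (n + 1 - g) ∧ F2.ncard = 2 ^ g * (n + 2 - g) ∧
    ∀ u ∉ F1 ∪ F2, ∀ v ∈ symmDiff F1 F2, ¬ (HCN n).Adj u v := by
  obtain ⟨x, S, f, hS, hXeq⟩ := hX
  obtain rfl : X = HCN.clusterSubcube x S f := hXeq
  subst hF1 hF2
  have hdim : n - S.card = g := by omega
  refine ⟨HCN.setNbhd_ne_union_setNbhd ⟨(x, f), rfl, fun _ _ => rfl⟩,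
    HCN.goodNbrSet_setNbhd_clusterSubcube hn hg2 hdim.ge,
    HCN.goodNbrSet_union_setNbhd_clusterSubcube hn hg2, ?_, ?_, fun u hu v hv => ?_⟩
  · rw [HCN.ncard_setNbhd_clusterSubcube (by omega), hdim]
    congr 1
    omega
  · rw [HCN.ncard_union_setNbhd_clusterSubcube (by omega), hdim]
    congr 1
    omega
  · rw [HCN.symmDiff_setNbhd_union_setNbhd] at hv
    exact HCN.not_adj_of_notMem_union_setNbhd (fun h => hu (Or.inr h)) hv

/-- For a subcube X of a cluster of HCN_n inducing Q_g (1 ≤ g ≤ n-1),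
F₁ = N(X) and F₂ = N[X] are distinct g-good-neighbor faulty sets with
|F₁| = 2^g(n+1-g), |F₂| = 2^g(n+2-g), and there is no edge between
V \ (F₁ ∪ F₂) and F₁ Δ F₂. -/
theorem stmt_12 (n g : ℕ) (hn : 2 ≤ n) (hg1 : 1 ≤ g) (hg2 : g ≤ n - 1)
    (X : Set (HVert n)) (hX : IsClusterSubcube n g X)
    (F1 F2 : Set (HVert n)) (hF1 : F1 = setNbhd n X) (hF2 : F2 = X ∪ setNbhd n X) :
    F1 ≠ F2 ∧ GoodNbrSet n g F1 ∧ GoodNbrSet n g F2 ∧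
    F1.ncard = 2 ^ g * (n + 1 - g) ∧ F2.ncard = 2 ^ g * (n + 2 - g) ∧
    ∀ u ∉ F1 ∪ F2, ∀ v ∈ symmDiff F1 F2, ¬ (HCN n).Adj u v :=
  stmt_12_general n g hn hg2 X hX F1 F2 hF1 hF2
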